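/- For every integer p ≥ 1 there exists a constant C_p > 0 such that the following holds: for every integer n ≥ 1, every p₁,…,pₙ ∈ [0,1], and independent random variables X₁,…,Xₙ with ℙ(X_i = 1) = p_i and ℙ(X_i = 0) = 1 − p_i, writing μ = ∑_{i=1}^n p_i, one has E[ ( ∑_{i=1}^n (X_i − p_i) )^{2p} ] ≤ C_p · max(μ, 1)^p. -/

import Mathlib

open MeasureTheory ProbabilityTheory Finset Real

/-!
Write `Zᵢ = Xᵢ - qᵢ` and expand `(∑ Zᵢ)^(2p)` as a sum of products `∏ⱼ Z_(f j)` over all maps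
`f : Fin (2p) → Fin n`. By independence each term is a product of moments `E[Zᵢ^k]`, `k` being
the number of times `f` takes the value `i`. A term in which some value is taken only once
vanishes since `E Zᵢ = 0`; as `|Zᵢ| ≤ 1`, the other moments are at most `E Zᵢ² ≤ qᵢ`. The
surviving maps take at most `p` values, and grouping them by their image `S` bounds the moment by
`p^(2p) ∑_{|S| ≤ p} ∏_{i ∈ S} qᵢ`. With `M = max (∑ qᵢ) 1 ≥ 1` each product is at most
`M^p ∏_{i ∈ S} (qᵢ / M)`, and these sum to at most `M^p ∏ᵢ (1 + qᵢ / M) ≤ e M^p`.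
-/

section Combinatorics

variable {ι : Type*} [Fintype ι]

theorem sum_prod_of_card_le_le_exp_mul_max_pow {v : ι → ℝ} (hv : ∀ i, 0 ≤ v i) (p : ℕ) :
    ∑ S : Finset ι with #S ≤ p, ∏ i ∈ S, v i ≤ exp 1 * max (∑ i, v i) 1 ^ p := by
  set M := max (∑ i, v i) 1
  have hM : 1 ≤ M := le_max_right _ _
  have hM0 : 0 < M := by linarith
  have hr : ∀ i, 0 ≤ v i / M := fun i => div_nonneg (hv i) hM0.le
  calc ∑ S : Finset ι with #S ≤ p, ∏ i ∈ S, v i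
      ≤ ∑ S : Finset ι with #S ≤ p, M ^ p * ∏ i ∈ S, v i / M := by
        refine sum_le_sum fun S hS => ?_
        calc ∏ i ∈ S, v i = M ^ #S * ∏ i ∈ S, v i / M := by
              rw [prod_div_distrib, prod_const]; field_simp
          _ ≤ M ^ p * ∏ i ∈ S, v i / M := by
              gcongr
              · exact prod_nonneg fun i _ => hr i
              · exact (mem_filter.mp hS).2
    _ ≤ M ^ p * ∑ S : Finset ι, ∏ i ∈ S, v i / M := by
        rw [← mul_sum]
        gcongr
        · exact fun S _ _ => prod_nonneg fun i _ => hr i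
        · exact subset_univ _
    _ = M ^ p * ∏ i, (1 + v i / M) := by rw [prod_one_add, powerset_univ]
    _ ≤ M ^ p * exp (∑ i, v i / M) := by gcongr; exact prod_one_add_le_exp_sum _ hr
    _ ≤ M ^ p * exp 1 := by
        gcongr
        rw [← sum_div]
        exact div_le_one_of_le₀ (le_max_left _ _) hM0.le
    _ = exp 1 * M ^ p := mul_comm _ _

variable [DecidableEq ι]

theorem sum_prod_image_le_pow_mul_sum {v : ι → ℝ} (hv : ∀ i, 0 ≤ v i) (N p : ℕ) :
    ∑ f : Fin N → ι with #(univ.image f) ≤ p, ∏ i ∈ univ.image f, v i ≤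
      (p : ℝ) ^ N * ∑ S : Finset ι with #S ≤ p, ∏ i ∈ S, v i := by
  rw [← sum_fiberwise_of_maps_to (g := fun f => univ.image f)
    (t := univ.filter fun S : Finset ι => #S ≤ p) fun f hf => by simpa using hf, mul_sum]
  refine sum_le_sum fun S hS => ?_
  have hfiber : #{f ∈ univ.filter fun f : Fin N → ι => #(univ.image f) ≤ p |
      univ.image f = S} ≤ p ^ N :=
    calc _ ≤ #(Fintype.piFinset fun _ : Fin N => S) := by
          refine card_le_card fun f hf => Fintype.mem_piFinset.mpr fun j => ?_
          rw [← (mem_filter.mp hf).2]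
          exact mem_image_of_mem f (mem_univ j)
      _ = #S ^ N := by simp
      _ ≤ p ^ N := Nat.pow_le_pow_left (mem_filter.mp hS).2 N
  calc _ = ∑ f ∈ univ.filter (fun f : Fin N → ι => #(univ.image f) ≤ p) with univ.image f = S,
          ∏ i ∈ S, v i := sum_congr rfl fun f hf => by rw [(mem_filter.mp hf).2]
    _ ≤ (p : ℝ) ^ N * ∏ i ∈ S, v i := by
        rw [sum_const, nsmul_eq_mul]
        gcongr
        · exact prod_nonneg fun i _ => hv i
        · exact_mod_cast hfiber

theorem sum_prod_card_fiber_le_sum_prod_image {m : ι → ℕ → ℝ} {v : ι → ℝ}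
    (h0 : ∀ i, m i 0 = 1) (h1 : ∀ i, m i 1 = 0) (hle : ∀ i k, 2 ≤ k → |m i k| ≤ v i) (p : ℕ) :
    ∑ f : Fin (2 * p) → ι, ∏ i, m i #{j | f j = i} ≤
      ∑ f : Fin (2 * p) → ι with #(univ.image f) ≤ p, ∏ i ∈ univ.image f, v i := by
  have hv : ∀ i, 0 ≤ v i := fun i => (abs_nonneg _).trans (hle i 2 le_rfl)
  rw [sum_filter]
  refine sum_le_sum fun f _ => ?_
  have himage : ∏ i, m i #{j | f j = i} = ∏ i ∈ univ.image f, m i #{j | f j = i} := by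
    refine (prod_subset (subset_univ _) fun i _ hi => ?_).symm
    have hempty : #{j | f j = i} = 0 :=
      card_eq_zero.mpr <| filter_eq_empty_iff.mpr fun j _ hj =>
        hi (mem_image.mpr ⟨j, mem_univ j, hj⟩)
    rw [hempty, h0]
  by_cases hf : ∀ i ∈ univ.image f, 2 ≤ #{j | f j = i}
  · have hcard : #(univ.image f) ≤ p := by
      have := card_nsmul_le_sum _ _ 2 hf
      rw [← card_eq_sum_card_image, card_univ, Fintype.card_fin, smul_eq_mul] at this
      omega
    rw [if_pos hcard, himage]
    calc _ ≤ |∏ i ∈ univ.image f, m i #{j | f j = i}| := le_abs_self _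
      _ = ∏ i ∈ univ.image f, |m i #{j | f j = i}| := abs_prod _ _
      _ ≤ ∏ i ∈ univ.image f, v i :=
          prod_le_prod (fun _ _ => abs_nonneg _) fun i hi => hle i _ (hf i hi)
  · push Not at hf
    obtain ⟨i, hi, hlt⟩ := hf
    have hone : #{j | f j = i} = 1 := by
      obtain ⟨j, -, hj⟩ := mem_image.mp hi
      have : 0 < #{j | f j = i} := card_pos.mpr ⟨j, by simp [hj]⟩
      omega
    rw [himage, prod_eq_zero hi (by rw [hone, h1])]
    split_ifs
    · exact prod_nonneg fun i _ => hv i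
    · rfl

end Combinatorics

section Moments

variable {Ω : Type*} [MeasurableSpace Ω] {μ : Measure Ω} [IsProbabilityMeasure μ]

theorem abs_integral_pow_le_integral_sq {Y : Ω → ℝ} (hY : AEMeasurable Y μ)
    (hb : ∀ᵐ ω ∂μ, |Y ω| ≤ 1) {k : ℕ} (hk : 2 ≤ k) :
    |∫ ω, Y ω ^ k ∂μ| ≤ ∫ ω, Y ω ^ 2 ∂μ := by
  have hsq : Integrable (fun ω => Y ω ^ 2) μ :=
    Integrable.of_bound (hY.pow_const 2).aestronglyMeasurable 1 <| hb.mono fun ω h => by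
      rw [Real.norm_eq_abs, abs_pow]; exact pow_le_one₀ (abs_nonneg _) h
  calc |∫ ω, Y ω ^ k ∂μ| ≤ ∫ ω, |Y ω ^ k| ∂μ := abs_integral_le_integral_abs
    _ ≤ ∫ ω, Y ω ^ 2 ∂μ := integral_mono_of_nonneg (ae_of_all _ fun _ => abs_nonneg _) hsq <|
        hb.mono fun ω h => by
          dsimp only
          rw [abs_pow, ← sq_abs]; exact pow_le_pow_of_le_one (abs_nonneg _) h hk

variable {ι : Type*} [Fintype ι] {Z : ι → Ω → ℝ}

theorem ProbabilityTheory.iIndepFun.integral_sum_pow [DecidableEq ι] (hZ : iIndepFun Z μ)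
    (hZm : ∀ i, AEMeasurable (Z i) μ) (hb : ∀ i, ∀ᵐ ω ∂μ, |Z i ω| ≤ 1) (N : ℕ) :
    ∫ ω, (∑ i, Z i ω) ^ N ∂μ = ∑ f : Fin N → ι, ∏ i, ∫ ω, Z i ω ^ #{j | f j = i} ∂μ := by
  have hexpand : ∀ ω, (∑ i, Z i ω) ^ N = ∑ f : Fin N → ι, ∏ i, Z i ω ^ #{j | f j = i} := by
    intro ω
    rw [sum_pow', Fintype.piFinset_univ]
    refine sum_congr rfl fun f _ => ?_
    rw [← prod_fiberwise' univ f fun i => Z i ω]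
    exact prod_congr rfl fun i _ => prod_const _
  have hint : ∀ f : Fin N → ι, Integrable (fun ω => ∏ i, Z i ω ^ #{j | f j = i}) μ := by
    intro f
    refine Integrable.of_bound (aestronglyMeasurable_fun_prod _ fun i _ =>
      ((hZm i).pow_const _).aestronglyMeasurable) 1 ?_
    filter_upwards [ae_all_iff.mpr hb] with ω hω
    rw [Real.norm_eq_abs, abs_prod]
    exact prod_le_one (fun _ _ => abs_nonneg _) fun i _ => by
      rw [abs_pow]; exact pow_le_one₀ (abs_nonneg _) (hω i)
  simp_rw [hexpand]
  rw [integral_finsetSum _ fun f _ => hint f]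
  exact sum_congr rfl fun f _ =>
    hZ.integral_fun_prod_comp hZm fun i => (continuous_pow _).aestronglyMeasurable

theorem ProbabilityTheory.iIndepFun.integral_sum_pow_le (hZ : iIndepFun Z μ)
    (hZm : ∀ i, AEMeasurable (Z i) μ) (hb : ∀ i, ∀ᵐ ω ∂μ, |Z i ω| ≤ 1)
    (hmean : ∀ i, ∫ ω, Z i ω ∂μ = 0) (p : ℕ) :
    ∫ ω, (∑ i, Z i ω) ^ (2 * p) ∂μ ≤
      exp 1 * p ^ (2 * p) * max (∑ i, ∫ ω, Z i ω ^ 2 ∂μ) 1 ^ p := by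
  classical
  have hv : ∀ i, 0 ≤ ∫ ω, Z i ω ^ 2 ∂μ := fun i => integral_nonneg fun ω => sq_nonneg _
  calc ∫ ω, (∑ i, Z i ω) ^ (2 * p) ∂μ
      = ∑ f : Fin (2 * p) → ι, ∏ i, ∫ ω, Z i ω ^ #{j | f j = i} ∂μ :=
        hZ.integral_sum_pow hZm hb _
    _ ≤ ∑ f : Fin (2 * p) → ι with #(univ.image f) ≤ p, ∏ i ∈ univ.image f, ∫ ω, Z i ω ^ 2 ∂μ :=
        sum_prod_card_fiber_le_sum_prod_image (by simp) (by simpa using hmean)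
          (fun i _ hk => abs_integral_pow_le_integral_sq (hZm i) (hb i) hk) p
    _ ≤ (p : ℝ) ^ (2 * p) * ∑ S : Finset ι with #S ≤ p, ∏ i ∈ S, ∫ ω, Z i ω ^ 2 ∂μ :=
        sum_prod_image_le_pow_mul_sum hv _ _
    _ ≤ (p : ℝ) ^ (2 * p) * (exp 1 * max (∑ i, ∫ ω, Z i ω ^ 2 ∂μ) 1 ^ p) := by
        gcongr
        exact sum_prod_of_card_le_le_exp_mul_max_pow hv p
    _ = exp 1 * p ^ (2 * p) * max (∑ i, ∫ ω, Z i ω ^ 2 ∂μ) 1 ^ p := by ring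

end Moments

section Bernoulli

variable {Ω : Type*} [MeasurableSpace Ω] {μ : Measure Ω} [IsProbabilityMeasure μ] {X : Ω → ℝ}
  {q : ℝ}

theorem ae_eq_zero_or_eq_one_of_measure_eq (hX : Measurable X) (hq : q ∈ Set.Icc 0 1)
    (h1 : μ {ω | X ω = 1} = ENNReal.ofReal q) (h0 : μ {ω | X ω = 0} = ENNReal.ofReal (1 - q)) :
    ∀ᵐ ω ∂μ, X ω = 0 ∨ X ω = 1 := by
  have hm : ∀ x, MeasurableSet {ω | X ω = x} := fun x => hX (measurableSet_singleton x)
  have hdisj : Disjoint {ω | X ω = 0} {ω | X ω = 1} :=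
    Set.disjoint_left.mpr fun ω h0 h1 => zero_ne_one (h0.symm.trans h1)
  refine (ae_iff_measure_eq (p := fun ω => X ω = 0 ∨ X ω = 1)
    ((hm 0).union (hm 1)).nullMeasurableSet).mpr ?_
  rw [Set.ofPred_or, measure_union hdisj (hm 1), h0, h1,
    ← ENNReal.ofReal_add (by linarith [hq.2]) hq.1]
  simp

theorem integral_comp_eq_of_measure_eq (hX : Measurable X) (hq : q ∈ Set.Icc 0 1)
    (h1 : μ {ω | X ω = 1} = ENNReal.ofReal q) (h0 : μ {ω | X ω = 0} = ENNReal.ofReal (1 - q))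
    (g : ℝ → ℝ) :
    ∫ ω, g (X ω) ∂μ = (1 - q) * g 0 + q * g 1 := by
  have hm : ∀ x, MeasurableSet {ω | X ω = x} := fun x => hX (measurableSet_singleton x)
  have hsplit : (fun ω => g (X ω)) =ᵐ[μ] fun ω =>
      {ω | X ω = 0}.indicator (fun _ => g 0) ω + {ω | X ω = 1}.indicator (fun _ => g 1) ω := by
    filter_upwards [ae_eq_zero_or_eq_one_of_measure_eq hX hq h1 h0] with ω hω
    rcases hω with hω | hω <;> simp [hω]
  rw [integral_congr_ae hsplit, integral_add ((integrable_const _).indicator (hm 0))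
    ((integrable_const _).indicator (hm 1)), integral_indicator_const _ (hm 0),
    integral_indicator_const _ (hm 1), measureReal_def, measureReal_def, h0, h1,
    ENNReal.toReal_ofReal (by linarith [hq.2]), ENNReal.toReal_ofReal hq.1, smul_eq_mul,
    smul_eq_mul]

end Bernoulli

theorem bernoulli_centered_moment_bound_general (p : ℕ) :
    ∃ C : ℝ, 0 < C ∧
      ∀ (n : ℕ), 1 ≤ n →
      ∀ (q : Fin n → ℝ), (∀ i, q i ∈ Set.Icc (0 : ℝ) 1) →
      ∀ (Ω : Type) (_ : MeasurableSpace Ω) (μ : Measure Ω), IsProbabilityMeasure μ →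
      ∀ (X : Fin n → Ω → ℝ), (∀ i, Measurable (X i)) →
        iIndepFun X μ →
        (∀ i, μ {ω | X i ω = 1} = ENNReal.ofReal (q i)) →
        (∀ i, μ {ω | X i ω = 0} = ENNReal.ofReal (1 - q i)) →
        (∫ ω, (∑ i, (X i ω - q i)) ^ (2 * p) ∂μ) ≤ C * (max (∑ i, q i) 1) ^ p := by
  refine ⟨exp 1 * p ^ (2 * p), by rcases Nat.eq_zero_or_pos p with rfl | _ <;> positivity, ?_⟩
  intro n _ q hq Ω _ μ _ X hXm hX h1 h0
  have hlaw : ∀ i (g : ℝ → ℝ), ∫ ω, g (X i ω) ∂μ = (1 - q i) * g 0 + q i * g 1 :=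
    fun i => integral_comp_eq_of_measure_eq (hXm i) (hq i) (h1 i) (h0 i)
  have hb : ∀ i, ∀ᵐ ω ∂μ, |X i ω - q i| ≤ 1 := fun i => by
    filter_upwards [ae_eq_zero_or_eq_one_of_measure_eq (hXm i) (hq i) (h1 i) (h0 i)] with ω hω
    rcases hω with hω | hω <;> rw [hω, abs_le] <;> constructor <;> linarith [(hq i).1, (hq i).2]
  have hZ : iIndepFun (fun i ω => X i ω - q i) μ :=
    hX.comp (fun i x => x - q i) fun i => measurable_id.sub_const (q i)
  calc ∫ ω, (∑ i, (X i ω - q i)) ^ (2 * p) ∂μ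
      ≤ exp 1 * p ^ (2 * p) * max (∑ i, ∫ ω, (X i ω - q i) ^ 2 ∂μ) 1 ^ p :=
        hZ.integral_sum_pow_le (fun i => ((hXm i).sub_const _).aemeasurable) hb
          (fun i => by rw [hlaw i (· - q i)]; ring) p
    _ ≤ exp 1 * p ^ (2 * p) * max (∑ i, q i) 1 ^ p := by
        gcongr with i
        rw [hlaw i (fun x => (x - q i) ^ 2)]
        nlinarith [(hq i).1, (hq i).2]

/-- **Centered moment bound for sums of independent Bernoulli variables.** For every `p ≥ 1`
there is `C_p > 0` such that for all `n ≥ 1`, all `p₁, …, pₙ ∈ [0,1]` and independent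
`Bernoulli(p_i)` random variables `X₁, …, Xₙ`, writing `μ̄ = ∑ p_i`, one has
`E[(∑ (X_i - p_i))^{2p}] ≤ C_p · max(μ̄, 1)^p`. -/
theorem bernoulli_centered_moment_bound (p : ℕ) (hp : 1 ≤ p) :
    ∃ C : ℝ, 0 < C ∧
      ∀ (n : ℕ), 1 ≤ n →
      ∀ (q : Fin n → ℝ), (∀ i, q i ∈ Set.Icc (0 : ℝ) 1) →
      ∀ (Ω : Type) (_ : MeasurableSpace Ω) (μ : Measure Ω), IsProbabilityMeasure μ →
      ∀ (X : Fin n → Ω → ℝ), (∀ i, Measurable (X i)) →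
        iIndepFun X μ →
        (∀ i, μ {ω | X i ω = 1} = ENNReal.ofReal (q i)) →
        (∀ i, μ {ω | X i ω = 0} = ENNReal.ofReal (1 - q i)) →
        (∫ ω, (∑ i, (X i ω - q i)) ^ (2 * p) ∂μ) ≤ C * (max (∑ i, q i) 1) ^ p :=
  bernoulli_centered_moment_bound_general p
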